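/- arXiv:1102.1783 — 6 statements merged into one kernel-verified Lean document; each statement's English description precedes it below -/
import Mathlib

section
/- Sequential color-verification correctness (the metaquery test): Let C ≥ 2 be a natural number, let Q be a finite index set, and let c, χ : Q → Fin C. For each k with 1 ≤ k ≤ C−1, let G_k be the simple graph on vertex set Fin C in which two distinct vertices a, b are adjacent if and only if either there exists q ∈ Q with {a, b} = {χ(q), c(q)}, or {a.val, b.val} = {m, m+1} for some natural number m with m+1 ≤ k−1. Then vertex k−1 and vertex k are not reachable from each other in G_k for every k with 1 ≤ k ≤ C−1 if and only if χ(q) = c(q) for all q ∈ Q. -/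
/-- Sequential color-verification correctness (the metaquery test). -/
theorem metaquery_correctness (C : ℕ) (hC : 2 ≤ C) (Q : Type) [Fintype Q]
    (c χ : Q → Fin C) :
    (∀ k : ℕ, ∀ _hk1 : 1 ≤ k, ∀ _hk2 : k ≤ C - 1,
      ¬ (SimpleGraph.fromRel (fun a b : Fin C =>
            (∃ q : Q, ({a, b} : Set (Fin C)) = {χ q, c q}) ∨
            (∃ m : ℕ, m + 1 ≤ k - 1 ∧
              ({(a : ℕ), (b : ℕ)} : Set ℕ) = {m, m + 1}))).Reachable
          ⟨k - 1, by omega⟩ ⟨k, by omega⟩) ↔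
    ∀ q : Q, χ q = c q := by
  constructor
  · intro h q
    by_contra hne
    have hvne : (χ q : ℕ) ≠ (c q : ℕ) := fun h' => hne (Fin.ext h')
    set s : ℕ := min (χ q : ℕ) (c q : ℕ) with hs
    set t : ℕ := max (χ q : ℕ) (c q : ℕ) with ht
    have hst : s < t := by omega
    have htC : t < C := by
      have := (χ q).isLt; have := (c q).isLt; omega
    have hk1 : 1 ≤ t := by omega
    have hk2 : t ≤ C - 1 := by omega
    apply h t hk1 hk2
    set G := (SimpleGraph.fromRel (fun a b : Fin C =>
            (∃ q : Q, ({a, b} : Set (Fin C)) = {χ q, c q}) ∨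
            (∃ m : ℕ, m + 1 ≤ t - 1 ∧
              ({(a : ℕ), (b : ℕ)} : Set ℕ) = {m, m + 1}))) with hG
    have hadj : G.Adj ⟨s, by omega⟩ ⟨t, by omega⟩ := by
      refine ⟨by simp [Fin.ext_iff]; omega, ?_⟩
      left; left
      refine ⟨q, ?_⟩
      rcases lt_or_gt_of_ne hvne with hlt | hlt
      · have h1 : (⟨s, by omega⟩ : Fin C) = χ q := by simp [Fin.ext_iff]; omega
        have h2 : (⟨t, by omega⟩ : Fin C) = c q := by simp [Fin.ext_iff]; omega
        rw [h1, h2]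
      · have h1 : (⟨s, by omega⟩ : Fin C) = c q := by simp [Fin.ext_iff]; omega
        have h2 : (⟨t, by omega⟩ : Fin C) = χ q := by simp [Fin.ext_iff]; omega
        rw [h1, h2, Set.pair_comm]
    have hpath : ∀ n : ℕ, s ≤ n → (hn : n ≤ t - 1) →
        G.Reachable ⟨s, by omega⟩ ⟨n, by omega⟩ := by
      intro n hn1 hn2
      induction n with
      | zero =>
        have he : (⟨s, by omega⟩ : Fin C) = ⟨0, by omega⟩ := by
          simp [Fin.ext_iff]; omega
        rw [he]
      | succ m ih =>
        rcases Nat.lt_or_ge m s with hms | hms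
        · have : s = m + 1 := by omega
          have he : (⟨s, by omega⟩ : Fin C) = ⟨m + 1, by omega⟩ := by
            simp [Fin.ext_iff]; omega
          rw [← he]
        · have hr := ih hms (by omega)
          refine hr.trans ?_
          have : G.Adj ⟨m, by omega⟩ ⟨m + 1, by omega⟩ := by
            refine ⟨by simp [Fin.ext_iff], ?_⟩
            left; right
            exact ⟨m, by omega, by simp⟩
          exact this.reachable
    have hr1 : G.Reachable ⟨s, by omega⟩ ⟨t - 1, by omega⟩ :=
      hpath (t - 1) (by omega) (by omega)
    exact hr1.symm.trans hadj.reachable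
  · intro hχ k hk1 hk2 hr
    set G := (SimpleGraph.fromRel (fun a b : Fin C =>
            (∃ q : Q, ({a, b} : Set (Fin C)) = {χ q, c q}) ∨
            (∃ m : ℕ, m + 1 ≤ k - 1 ∧
              ({(a : ℕ), (b : ℕ)} : Set ℕ) = {m, m + 1}))) with hG
    obtain ⟨p⟩ := hr.symm
    have hne : (⟨k, by omega⟩ : Fin C) ≠ ⟨k - 1, by omega⟩ := by
      simp [Fin.ext_iff]; omega
    have hnil : ¬ p.Nil := SimpleGraph.Walk.not_nil_of_ne hne
    have hadj : G.Adj ⟨k, by omega⟩ (p.getVert 1) := p.adj_snd hnil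
    set x := p.getVert 1 with hx
    clear_value x
    clear hx hnil hr p
    obtain ⟨hab, hrel⟩ := hadj
    have hk_val : ((⟨k, by omega⟩ : Fin C) : ℕ) = k := rfl
    -- derive contradiction from either relation direction
    rcases hrel with h | h
    · rcases h with ⟨q, hset⟩ | ⟨m, hm, hset⟩
      · rw [hχ q, Set.pair_eq_singleton, Set.ext_iff] at hset
        have h1 := (hset ⟨k, by omega⟩).mp (Set.mem_insert _ _)
        have h2 := (hset x).mp (Set.mem_insert_of_mem _ rfl)
        rw [Set.mem_singleton_iff] at h1 h2
        exact hab (h1.trans h2.symm)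
      · have : (k : ℕ) ∈ ({m, m + 1} : Set ℕ) := by
          rw [← hset]; exact Set.mem_insert _ _
        simp at this; omega
    · rcases h with ⟨q, hset⟩ | ⟨m, hm, hset⟩
      · rw [hχ q, Set.pair_eq_singleton, Set.ext_iff] at hset
        have h1 := (hset x).mp (Set.mem_insert _ _)
        have h2 := (hset ⟨k, by omega⟩).mp (Set.mem_insert_of_mem _ rfl)
        rw [Set.mem_singleton_iff] at h1 h2
        exact hab (h2.trans h1.symm)
      · have : (k : ℕ) ∈ ({m, m + 1} : Set ℕ) := by
          rw [← hset]; exact Set.mem_insert_of_mem _ rfl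
        simp at this; omega
end

section
/- Inconsistency detection at the maximum color step: Let C ≥ 1, let Q be a set, let c, χ : Q → Fin C, and suppose there is q₀ ∈ Q with χ(q₀) ≠ c(q₀). Let k = max((χ q₀).val, (c q₀).val) (so k ≥ 1). Then in the simple graph on Fin C in which distinct vertices a, b are adjacent iff there exists q ∈ Q with {a, b} = {χ(q), c(q)} or {a.val, b.val} = {m, m+1} for some m with m+1 ≤ k−1, the vertex with value k is reachable from the vertex with value k−1. -/
/-- Inconsistency detection at the maximum color step. -/
theorem metaquery_detects_inconsistency (C : ℕ) (hC : 1 ≤ C) (Q : Type)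
    (c χ : Q → Fin C) (q₀ : Q) (h : χ q₀ ≠ c q₀) :
    (SimpleGraph.fromRel (fun a b : Fin C =>
        (∃ q : Q, ({a, b} : Set (Fin C)) = {χ q, c q}) ∨
        (∃ m : ℕ, m + 1 ≤ max ((χ q₀ : Fin C) : ℕ) ((c q₀ : Fin C) : ℕ) - 1 ∧
          ({(a : ℕ), (b : ℕ)} : Set ℕ) = {m, m + 1}))).Reachable
      ⟨max ((χ q₀ : Fin C) : ℕ) ((c q₀ : Fin C) : ℕ) - 1, by
        have h1 := (χ q₀).isLt; have h2 := (c q₀).isLt; omega⟩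
      ⟨max ((χ q₀ : Fin C) : ℕ) ((c q₀ : Fin C) : ℕ), by
        have h1 := (χ q₀).isLt; have h2 := (c q₀).isLt; omega⟩ := by
  have hx := (χ q₀).isLt
  have hy := (c q₀).isLt
  have hxy : ((χ q₀ : Fin C) : ℕ) ≠ ((c q₀ : Fin C) : ℕ) :=
    fun he => h (Fin.ext he)
  set x := ((χ q₀ : Fin C) : ℕ) with hxdef
  set y := ((c q₀ : Fin C) : ℕ) with hydef
  set G := SimpleGraph.fromRel (fun a b : Fin C =>
        (∃ q : Q, ({a, b} : Set (Fin C)) = {χ q, c q}) ∨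
        (∃ m : ℕ, m + 1 ≤ max x y - 1 ∧
          ({(a : ℕ), (b : ℕ)} : Set ℕ) = {m, m + 1})) with hG
  set k := max x y with hk
  have hk1 : 1 ≤ k := by omega
  have hkC : k < C := by omega
  -- chain reachability
  have chain : ∀ d : ℕ, d ≤ k - 1 →
      G.Reachable ⟨k - 1 - d, by omega⟩ ⟨k - 1, by omega⟩ := by
    intro d
    induction d with
    | zero => intro _; exact SimpleGraph.Reachable.refl _
    | succ n ih =>
      intro hd
      have hstep : G.Adj ⟨k - 1 - (n + 1), by omega⟩ ⟨k - 1 - n, by omega⟩ := by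
        rw [hG]
        refine ⟨?_, Or.inl (Or.inr ⟨k - 1 - (n + 1), by omega, ?_⟩)⟩
        · intro hcon
          have := congrArg Fin.val hcon
          simp at this
          omega
        · have : k - 1 - n = (k - 1 - (n + 1)) + 1 := by omega
          simp [this]
      exact (hstep.reachable).trans (ih (by omega))
  -- the min vertex
  set j := min x y with hj
  have hjk : j ≤ k - 1 := by omega
  have hreach1 : G.Reachable ⟨k - 1, by omega⟩ ⟨j, by omega⟩ := by
    have := chain (k - 1 - j) (by omega)
    have heq : (⟨k - 1 - (k - 1 - j), by omega⟩ : Fin C) = ⟨j, by omega⟩ := by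
      apply Fin.ext; simp; omega
    rw [heq] at this
    exact this.symm
  have hadj : G.Adj ⟨j, by omega⟩ ⟨k, hkC⟩ := by
    rw [hG]
    refine ⟨?_, Or.inl (Or.inl ⟨q₀, ?_⟩)⟩
    · intro hcon
      have := congrArg Fin.val hcon
      simp at this
      omega
    · rcases le_total x y with hle | hle
      · have h1 : (⟨j, by omega⟩ : Fin C) = χ q₀ := by
          apply Fin.ext; simp; omega
        have h2 : (⟨k, hkC⟩ : Fin C) = c q₀ := by
          apply Fin.ext; simp; omega
        rw [h1, h2]
      · have h1 : (⟨j, by omega⟩ : Fin C) = c q₀ := by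
          apply Fin.ext; simp; omega
        have h2 : (⟨k, hkC⟩ : Fin C) = χ q₀ := by
          apply Fin.ext; simp; omega
        rw [h1, h2, Set.pair_comm]
  exact hreach1.trans hadj.reachable
end

section
/- Expected number of distinct ancestors: Let L, N, M, k be positive integers with N = k·M and N ∣ L. Let f : Fin L → Fin N be a balanced map, i.e., every fiber f⁻¹(y) has exactly L/N elements. Let S₁, …, S_k be independent random finite subsets of Fin L, each uniformly distributed over the collection of all M-element subsets of Fin L. Then the expected cardinality of the image f(S₁ ∪ ⋯ ∪ S_k) is at least (1 − 1/e)·N, where e is Euler's number. -/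
open MeasureTheory ProbabilityTheory Finset
open scoped ENNReal

/-! A fixed ancestor `y` is missed only if each of the `k` independent sets avoids its fiber of
`L / N` leaves. A uniform `M`-subset does so with probability
`C(L - L/N, M) / C(L, M) ≤ (1 - 1/N)^M`, so `y` is missed with probability at most
`(1 - 1/N)^(kM) = (1 - 1/N)^N ≤ 1/e`; linearity of expectation over the `N` ancestors finishes. -/

theorem Nat.descFactorial_mul_pow_le (M : ℕ) {a b : ℕ} (hab : a ≤ b) :
    a.descFactorial M * b ^ M ≤ b.descFactorial M * a ^ M := by
  induction M with
  | zero => simp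
  | succ M ih =>
    have hstep : (a - M) * b ≤ (b - M) * a := by
      rw [Nat.sub_mul, Nat.sub_mul, Nat.mul_comm a b]
      exact Nat.sub_le_sub_left (Nat.mul_le_mul_left M hab) _
    calc a.descFactorial (M + 1) * b ^ (M + 1)
        = ((a - M) * b) * (a.descFactorial M * b ^ M) := by
          rw [Nat.descFactorial_succ, pow_succ]; ring
      _ ≤ ((b - M) * a) * (b.descFactorial M * a ^ M) := Nat.mul_le_mul hstep ih
      _ = b.descFactorial (M + 1) * a ^ (M + 1) := by
          rw [Nat.descFactorial_succ, pow_succ]; ring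

theorem Nat.choose_mul_pow_le (M : ℕ) {a b : ℕ} (hab : a ≤ b) :
    a.choose M * b ^ M ≤ b.choose M * a ^ M := by
  have h := Nat.descFactorial_mul_pow_le M hab
  rw [Nat.descFactorial_eq_factorial_mul_choose, Nat.descFactorial_eq_factorial_mul_choose,
    mul_assoc, mul_assoc] at h
  exact Nat.le_of_mul_le_mul_left h M.factorial_pos

theorem Nat.choose_div_choose_le_div_pow (M : ℕ) {a b : ℕ} (hab : a ≤ b) (hb : 0 < b) :
    (a.choose M : ℝ) / b.choose M ≤ ((a : ℝ) / b) ^ M := by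
  rcases (b.choose M).eq_zero_or_pos with h | h
  · rw [h, Nat.cast_zero, div_zero]
    positivity
  rw [div_pow, div_le_div_iff₀ (by exact_mod_cast h) (by positivity), mul_comm ((a : ℝ) ^ M)]
  exact_mod_cast Nat.choose_mul_pow_le M hab

section UniformSubset

variable {α : Type*} [Fintype α] [DecidableEq α]
  [MeasurableSpace (Finset α)] [MeasurableSingletonClass (Finset α)]

theorem uniformOn_card_eq_disjoint (M : ℕ) (F : Finset α) :
    uniformOn {s : Finset α | #s = M} {s | Disjoint s F} =
      ((Fintype.card α - #F).choose M : ℝ≥0∞) / (Fintype.card α).choose M := by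
  have hT : {s : Finset α | #s = M} = ↑(powersetCard M (univ : Finset α)) := by
    ext; simp
  have hTD : {s : Finset α | #s = M} ∩ {s | Disjoint s F} = ↑(powersetCard M Fᶜ) := by
    ext; simp [subset_compl_iff_disjoint_right, and_comm]
  have hsub : powersetCard M Fᶜ ⊆ powersetCard M univ := powersetCard_mono (subset_univ _)
  rw [← uniformOn_inter_self (Set.toFinite _), hTD, hT, uniformOn_apply_finset,
    inter_eq_right.mpr hsub, card_powersetCard, card_powersetCard, card_compl, card_univ]

theorem uniformOn_disjoint_toReal_le [Nonempty α] (M : ℕ) (F : Finset α) :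
    (uniformOn {s : Finset α | #s = M} {s | Disjoint s F}).toReal ≤
      (1 - (#F : ℝ) / Fintype.card α) ^ M := by
  have hpos : (0 : ℝ) < Fintype.card α := by exact_mod_cast Fintype.card_pos
  have hF : #F ≤ Fintype.card α := card_le_univ F
  rw [uniformOn_card_eq_disjoint, ENNReal.toReal_div, ENNReal.toReal_natCast,
    ENNReal.toReal_natCast, one_sub_div hpos.ne', ← Nat.cast_sub hF]
  exact Nat.choose_div_choose_le_div_pow M (Nat.sub_le _ _) Fintype.card_pos

end UniformSubset

theorem ProbabilityTheory.iIndepFun.measure_iInter_preimage_eq_pow {Ω β ι : Type*} [MeasurableSpace Ω]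
    [MeasurableSpace β] [Fintype ι] {μ : Measure Ω} {ν : Measure β} {S : ι → Ω → β}
    (hindep : iIndepFun S μ) (hmeas : ∀ i, Measurable (S i)) (hlaw : ∀ i, μ.map (S i) = ν)
    {B : Set β} (hB : MeasurableSet B) :
    μ (⋂ i, S i ⁻¹' B) = ν B ^ Fintype.card ι := by
  have h := hindep.measure_inter_preimage_eq_mul univ (sets := fun _ => B) (fun _ _ => hB)
  simp only [mem_univ, Set.iInter_true] at h
  rw [h, ← card_univ, ← prod_const]
  exact prod_congr rfl fun i _ => by rw [← Measure.map_apply (hmeas i) hB, hlaw i]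

theorem integral_card_eq_sum_measureReal {Ω β : Type*} [MeasurableSpace Ω] [Fintype β]
    {μ : Measure Ω} [IsFiniteMeasure μ] (T : Ω → Finset β)
    (hT : ∀ y, MeasurableSet {ω | y ∈ T ω}) :
    ∫ ω, (#(T ω) : ℝ) ∂μ = ∑ y, μ.real {ω | y ∈ T ω} := by
  classical
  have hcard : ∀ ω, (#(T ω) : ℝ) = ∑ y, {ω | y ∈ T ω}.indicator 1 ω := by
    intro ω
    simp [Set.indicator_apply]
  simp_rw [hcard]
  rw [integral_finsetSum _ fun y _ => (integrable_const 1).indicator (hT y)]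
  simp_rw [integral_indicator_one (hT _)]

section IndependentUniformSubsets

variable {Ω α ι : Type*} [MeasurableSpace Ω] {μ : Measure Ω}
  [Fintype α] [MeasurableSpace (Finset α)] [MeasurableSingletonClass (Finset α)]
  [Fintype ι] {S : ι → Ω → Finset α}

theorem measurableSet_exists_not_disjoint (hmeas : ∀ i, Measurable (S i)) (F : Finset α) :
    MeasurableSet {ω | ∃ i, ¬Disjoint (S i ω) F} := by
  simp only [Set.ofPred_exists]
  exact .iUnion fun i => hmeas i (.of_discrete (s := {s | ¬Disjoint s F}))

theorem measureReal_exists_not_disjoint_ge [IsProbabilityMeasure μ] [DecidableEq α] [Nonempty α] {M : ℕ}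
    (hmeas : ∀ i, Measurable (S i)) (hindep : iIndepFun S μ)
    (hunif : ∀ i, μ.map (S i) = uniformOn {s : Finset α | #s = M}) (F : Finset α) :
    1 - (1 - (#F : ℝ) / Fintype.card α) ^ (Fintype.card ι * M) ≤
      μ.real {ω | ∃ i, ¬Disjoint (S i ω) F} := by
  have hD : MeasurableSet {s : Finset α | Disjoint s F} := .of_discrete
  have hmiss : μ.real {ω | ∃ i, ¬Disjoint (S i ω) F}ᶜ ≤
      (1 - (#F : ℝ) / Fintype.card α) ^ (Fintype.card ι * M) := by
    have hcompl : {ω | ∃ i, ¬Disjoint (S i ω) F}ᶜ = ⋂ i, S i ⁻¹' {s | Disjoint s F} := by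
      ext; simp
    rw [hcompl, measureReal_def, hindep.measure_iInter_preimage_eq_pow hmeas hunif hD,
      ENNReal.toReal_pow, pow_mul']
    exact pow_le_pow_left₀ ENNReal.toReal_nonneg (uniformOn_disjoint_toReal_le M F) _
  rw [probReal_compl_eq_one_sub (measurableSet_exists_not_disjoint hmeas F)] at hmiss
  linarith

end IndependentUniformSubsets

theorem expected_distinct_ancestors_general {Ω : Type} [MeasurableSpace Ω]
    (μ : Measure Ω) [IsProbabilityMeasure μ]
    (L N M k : ℕ) (hL : 0 < L) (hN : 0 < N)
    (hNk : N = k * M) (hdvd : N ∣ L)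
    (f : Fin L → Fin N)
    (hbal : ∀ y : Fin N, (Finset.univ.filter fun x => f x = y).card = L / N)
    [MeasurableSpace (Finset (Fin L))] [MeasurableSingletonClass (Finset (Fin L))]
    (S : Fin k → Ω → Finset (Fin L))
    (hmeas : ∀ i, Measurable (S i))
    (hindep : iIndepFun S μ)
    (hunif : ∀ i, μ.map (S i) = uniformOn {s : Finset (Fin L) | s.card = M}) :
    (1 - (Real.exp 1)⁻¹) * N ≤
      ∫ ω, (((Finset.univ.biUnion fun i => S i ω).image f).card : ℝ) ∂μ := by
  have : Nonempty (Fin L) := ⟨⟨0, hL⟩⟩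
  have hhit : ∀ ω y, y ∈ (univ.biUnion fun i => S i ω).image f ↔
      ∃ i, ¬Disjoint (S i ω) (univ.filter fun x => f x = y) := by
    intro ω y
    simp only [mem_image, mem_biUnion, mem_univ, true_and, not_disjoint_iff, mem_filter]
    constructor
    · rintro ⟨x, ⟨i, hx⟩, rfl⟩
      exact ⟨i, x, hx, rfl⟩
    · rintro ⟨i, x, hx, rfl⟩
      exact ⟨x, ⟨i, hx⟩, rfl⟩
  have hfiber : ∀ y, (#(univ.filter fun x => f x = y) : ℝ) / Fintype.card (Fin L) = 1 / N := by
    intro y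
    rw [hbal, Fintype.card_fin, Nat.cast_div hdvd (by positivity)]
    field_simp
  have hexp : (1 - 1 / (N : ℝ)) ^ N ≤ (Real.exp 1)⁻¹ := by
    rw [← Real.exp_neg]
    exact Real.one_sub_div_pow_le_exp_neg (by exact_mod_cast hN)
  rw [integral_card_eq_sum_measureReal _ fun y => by
    simpa only [hhit] using measurableSet_exists_not_disjoint hmeas _]
  calc (1 - (Real.exp 1)⁻¹) * N = ∑ _y : Fin N, (1 - (Real.exp 1)⁻¹) := by
        rw [sum_const, card_fin, nsmul_eq_mul, mul_comm]
    _ ≤ ∑ y : Fin N, μ.real {ω | ∃ i, ¬Disjoint (S i ω) (univ.filter fun x => f x = y)} := by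
      gcongr with y
      have h := measureReal_exists_not_disjoint_ge hmeas hindep hunif
        (univ.filter fun x => f x = y)
      rw [hfiber, Fintype.card_fin, ← hNk] at h
      linarith
    _ = _ := by simp only [hhit]

/-- Expected number of distinct ancestors collected by independent uniform
M-element subsets under a balanced map is at least (1 - 1/e)·N. -/
theorem expected_distinct_ancestors {Ω : Type} [MeasurableSpace Ω]
    (μ : Measure Ω) [IsProbabilityMeasure μ]
    (L N M k : ℕ) (hL : 0 < L) (hN : 0 < N) (hM : 0 < M) (hk : 0 < k)
    (hNk : N = k * M) (hdvd : N ∣ L)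
    (f : Fin L → Fin N)
    (hbal : ∀ y : Fin N, (Finset.univ.filter fun x => f x = y).card = L / N)
    [MeasurableSpace (Finset (Fin L))] [MeasurableSingletonClass (Finset (Fin L))]
    (S : Fin k → Ω → Finset (Fin L))
    (hmeas : ∀ i, Measurable (S i))
    (hindep : iIndepFun S μ)
    (hunif : ∀ i, μ.map (S i) = uniformOn {s : Finset (Fin L) | s.card = M}) :
    (1 - (Real.exp 1)⁻¹) * N ≤
      ∫ ω, (((Finset.univ.biUnion fun i => S i ω).image f).card : ℝ) ∂μ :=
  expected_distinct_ancestors_general μ L N M k hL hN hNk hdvd f hbal S hmeas hindep hunif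
end

section
/- Maximality of the central multinomial coefficient: Let N and C be positive integers with C ∣ N. For every function k : Fin C → ℕ with ∑_{j} k(j) = N, the multinomial coefficient N! / ∏_j (k(j))! is at most the central multinomial coefficient N! / ((N/C)!)^C. -/
/-! Since `k ↦ log k !` is convex, `k ! ≥ m ! * m ^ (k - m)` for all `k`. Multiplying these
tangent-line bounds over the parts of `k`, the powers of `m` cancel because `∑ k = C * m`, so
`∏ (k j)! ≥ (m !) ^ C` with `m = N / C`; dividing `N !` by both sides gives the claim. -/

open Finset Nat

namespace Nat

/-- `k ! ≥ m ! * m ^ (k - m)` with an integer exponent, multiplied out by `m ^ m`. -/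
theorem factorial_mul_pow_le_factorial_mul_pow (m k : ℕ) : m ! * m ^ k ≤ k ! * m ^ m := by
  rcases le_total m k with hmk | hkm
  · calc m ! * m ^ k = m ! * m ^ (k - m) * m ^ m := by rw [mul_assoc, pow_sub_mul_pow _ hmk]
      _ ≤ k ! * m ^ m := Nat.mul_le_mul_right _ (factorial_mul_pow_sub_le_factorial hmk)
  · have hdesc : k ! * m.descFactorial (m - k) = m ! := by
      simpa [Nat.sub_sub_self hkm] using factorial_mul_descFactorial (Nat.sub_le m k)
    calc m ! * m ^ k = k ! * m.descFactorial (m - k) * m ^ k := by rw [hdesc]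
      _ ≤ k ! * m ^ (m - k) * m ^ k := by gcongr; exact descFactorial_le_pow m _
      _ = k ! * m ^ m := by rw [mul_assoc, pow_sub_mul_pow _ hkm]

variable {ι : Type*} {s : Finset ι} {f : ι → ℕ} {m : ℕ}

theorem pow_card_factorial_le_prod_factorial (hf : ∑ i ∈ s, f i = #s * m) :
    m ! ^ #s ≤ ∏ i ∈ s, (f i)! := by
  have hprod : ∏ i ∈ s, (m ! * m ^ f i) ≤ ∏ i ∈ s, ((f i)! * m ^ m) :=
    prod_le_prod' fun i _ => factorial_mul_pow_le_factorial_mul_pow m (f i)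
  rw [prod_mul_distrib, prod_mul_distrib, prod_const, prod_const, prod_pow_eq_pow_sum, hf,
    mul_comm #s, pow_mul] at hprod
  exact Nat.le_of_mul_le_mul_right hprod (pow_pos pow_self_pos _)

theorem multinomial_le_multinomial_const (hf : ∑ i ∈ s, f i = #s * m) :
    multinomial s f ≤ multinomial s fun _ => m := by
  have hspec_const : m ! ^ #s * multinomial s (fun _ => m) = (#s * m)! := by
    simpa [prod_const, sum_const] using multinomial_spec s fun _ => m
  refine Nat.le_of_mul_le_mul_left ?_ (pow_pos (factorial_pos m) #s)
  calc m ! ^ #s * multinomial s f ≤ (∏ i ∈ s, (f i)!) * multinomial s f :=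
        Nat.mul_le_mul_right _ (pow_card_factorial_le_prod_factorial hf)
    _ = m ! ^ #s * multinomial s fun _ => m := by rw [multinomial_spec, hf, hspec_const]

end Nat

theorem central_multinomial_maximal_general (N C : ℕ)
    (hdvd : C ∣ N) (k : Fin C → ℕ) (hsum : ∑ j, k j = N) :
    Nat.multinomial Finset.univ k ≤
      Nat.multinomial Finset.univ (fun _ : Fin C => N / C) :=
  Nat.multinomial_le_multinomial_const <| by
    rw [hsum, Finset.card_univ, Fintype.card_fin, Nat.mul_div_cancel' hdvd]

/-- Maximality of the central multinomial coefficient. -/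
theorem central_multinomial_maximal (N C : ℕ) (hN : 0 < N) (hC : 0 < C)
    (hdvd : C ∣ N) (k : Fin C → ℕ) (hsum : ∑ j, k j = N) :
    Nat.multinomial Finset.univ k ≤
      Nat.multinomial Finset.univ (fun _ : Fin C => N / C) :=
  central_multinomial_maximal_general N C hdvd k hsum
end

section
/- Lower bound on the number of restrictions of balanced colorings: Let N and C be positive integers with C ∣ N, and let S be a subset of Fin N. Call x : Fin N → Fin C a balanced coloring if every fiber x⁻¹(j) has exactly N/C elements. Then the number of distinct restrictions to S of balanced colorings, multiplied by (N+1)^C, is at least C^{|S|}. Equivalently, the set {x restricted to S : x a balanced coloring} has cardinality at least C^{|S|} / (N+1)^C. -/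
/-!
Group the colorings of `Fin N` by their vector of fiber sizes: there are at most `(N + 1) ^ C`
such vectors, and the colorings with a given vector `k` form one orbit of the permutations of
`Fin N`, whose stabilizer has order `∏ j, (k j)!`. Since `m! * m ^ a ≤ a! * m ^ m`, this
product is smallest for the balanced vector, so the balanced colorings form the largest class
and number at least `C ^ N / (N + 1) ^ C`. A restriction to `S` extends in at most
`C ^ (N - |S|)` ways.
-/

open Finset Equiv MulAction
open scoped Nat

theorem Nat.factorial_mul_pow_le_factorial_mul_pow_s7 (a m : ℕ) : m ! * m ^ a ≤ a ! * m ^ m := by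
  rcases le_total m a with hma | ham
  · obtain ⟨d, rfl⟩ := Nat.exists_eq_add_of_le hma
    calc m ! * m ^ (m + d) = m ! * m ^ d * m ^ m := by ring
      _ ≤ m ! * (m + 1) ^ d * m ^ m := by gcongr; omega
      _ ≤ (m + d)! * m ^ m := by gcongr; exact Nat.factorial_mul_pow_le_factorial
  · obtain ⟨d, rfl⟩ := Nat.exists_eq_add_of_le ham
    calc (a + d)! * (a + d) ^ a = a ! * (a + d).descFactorial d * (a + d) ^ a := by
          rw [← Nat.factorial_mul_descFactorial (Nat.le_add_left d a), Nat.add_sub_cancel]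
      _ ≤ a ! * (a + d) ^ d * (a + d) ^ a := by gcongr; exact Nat.descFactorial_le_pow _ _
      _ = a ! * (a + d) ^ (a + d) := by ring

theorem Finset.pow_factorial_le_prod_factorial {ι : Type*} (s : Finset ι) (k : ι → ℕ)
    {m : ℕ} (hm : 0 < m) (hk : ∑ j ∈ s, k j = #s * m) : m ! ^ #s ≤ ∏ j ∈ s, (k j)! := by
  have key : m ! ^ #s * m ^ (#s * m) ≤ (∏ j ∈ s, (k j)!) * m ^ (#s * m) :=
    calc m ! ^ #s * m ^ (#s * m) = ∏ j ∈ s, m ! * m ^ k j := by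
          rw [prod_mul_distrib, prod_pow_eq_pow_sum, hk, prod_const]
      _ ≤ ∏ j ∈ s, (k j)! * m ^ m :=
          prod_le_prod' fun j _ => Nat.factorial_mul_pow_le_factorial_mul_pow_s7 _ _
      _ = (∏ j ∈ s, (k j)!) * m ^ (#s * m) := by
          rw [prod_mul_distrib, prod_const, ← pow_mul, mul_comm m]
  exact Nat.le_of_mul_le_mul_right key (by positivity)

theorem Finset.card_le_card_image_restrict_mul_pow {α β : Type*} [Fintype α] [Fintype β]
    [DecidableEq β] (s : Finset (α → β)) (S : Finset α) :
    #s ≤ #(s.image fun x (i : S) => x i) * Fintype.card β ^ (Fintype.card α - #S) := by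
  classical
  let e := piEquivPiSubtypeProd (· ∈ S) fun _ => β
  calc #s ≤ #((s.image fun x (i : S) => x i) ×ˢ (univ : Finset ({i // i ∉ S} → β))) :=
        card_le_card_of_injOn e (fun x hx => mem_product.2 ⟨mem_image_of_mem _ hx, mem_univ _⟩)
          e.injective.injOn
    _ = #(s.image fun x (i : S) => x i) * Fintype.card β ^ (Fintype.card α - #S) := by
        rw [card_product, card_univ, Fintype.card_fun, Fintype.card_subtype_compl,
          Fintype.card_coe]

namespace BalancedColoring

variable {α ι : Type*} [Fintype α] [DecidableEq ι]

def fiberCard (f : α → ι) (j : ι) : ℕ := #{a | f a = j}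

theorem sum_fiberCard [Fintype ι] (f : α → ι) : ∑ j, fiberCard f j = Fintype.card α := by
  simp only [fiberCard]
  rw [← card_eq_sum_card_fiberwise (fun a _ => mem_univ (f a)), card_univ]

theorem exists_perm_comp_eq_of_fiberCard_eq {f g : α → ι} (h : fiberCard f = fiberCard g) :
    ∃ σ : Perm α, f ∘ σ = g := by
  have hcard (j : ι) : Fintype.card {a // g a = j} = Fintype.card {a // f a = j} := by
    simpa [Fintype.card_subtype, fiberCard] using (congrFun h j).symm
  let e (j : ι) := Fintype.equivOfCardEq (hcard j)
  refine ⟨(sigmaFiberEquiv g).symm.trans ((sigmaCongrRight e).trans (sigmaFiberEquiv f)), ?_⟩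
  funext a
  exact (e (g a) ⟨a, rfl⟩).2

theorem mem_orbit_iff_fiberCard_eq {f g : α → ι} :
    g ∈ orbit (Perm α)ᵈᵐᵃ f ↔ fiberCard g = fiberCard f := by
  constructor
  · rintro ⟨σ, rfl⟩
    funext j
    exact card_equiv (DomMulAct.mk.symm σ) (by simp [DomMulAct.smul_apply])
  · intro h
    obtain ⟨σ, hσ⟩ := exists_perm_comp_eq_of_fiberCard_eq h.symm
    exact ⟨DomMulAct.mk σ, hσ⟩

variable [DecidableEq α] [Fintype ι]

theorem card_fiberCard_eq_mul_prod_factorial (f : α → ι) :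
    #{g : α → ι | fiberCard g = fiberCard f} * ∏ j, (fiberCard f j)! = (Fintype.card α)! := by
  have horbit :
      Nat.card (orbit (Perm α)ᵈᵐᵃ f) = #{g : α → ι | fiberCard g = fiberCard f} := by
    rw [← Nat.card_eq_finsetCard]
    exact Nat.card_congr (setCongr (Set.ext fun g => by simp [mem_orbit_iff_fiberCard_eq]))
  have hstab : Nat.card (stabilizer (Perm α)ᵈᵐᵃ f) = ∏ j, (fiberCard f j)! := by
    rw [Nat.card_congr (subtypeEquiv (q := fun σ : Perm α => f ∘ σ = f) DomMulAct.mk.symm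
      fun _ => DomMulAct.mem_stabilizer_iff),
      Nat.card_eq_fintype_card, DomMulAct.stabilizer_card]
    simp only [Fintype.card_subtype, fiberCard]
  rw [← horbit, ← hstab, ← Nat.card_prod, Nat.card_congr (orbitProdStabilizerEquivGroup _ f),
    Nat.card_congr DomMulAct.mk.symm, Nat.card_perm, Nat.card_eq_fintype_card]

variable (α ι) in
def balancedColorings (m : ℕ) : Finset (α → ι) := {f | ∀ j, fiberCard f j = m}

theorem balancedColorings_nonempty {m : ℕ} (h : Fintype.card α = Fintype.card ι * m) :
    (balancedColorings α ι m).Nonempty := by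
  let e : α ≃ ι × Fin m := Fintype.equivOfCardEq (by simpa using h)
  refine ⟨fun a => (e a).1, mem_filter.2 ⟨mem_univ _, fun j => ?_⟩⟩
  calc fiberCard (fun a => (e a).1) j = #({j} ×ˢ (univ : Finset (Fin m))) :=
        card_equiv e (by simp [Prod.ext_iff, eq_comm])
    _ = m := by simp

theorem card_fiberCard_eq_le_card_balancedColorings {m : ℕ}
    (hm : 0 < m) (h : Fintype.card α = Fintype.card ι * m) (f : α → ι) :
    #{g : α → ι | fiberCard g = fiberCard f} ≤ #(balancedColorings α ι m) := by
  obtain ⟨b, hb⟩ := balancedColorings_nonempty h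
  have hbal : fiberCard b = fun _ => m := funext (mem_filter.1 hb).2
  have hcard : #{g : α → ι | fiberCard g = fiberCard b} = #(balancedColorings α ι m) := by
    simp only [balancedColorings, hbal, funext_iff]
  have hfact : m ! ^ Fintype.card ι ≤ ∏ j, (fiberCard f j)! := by
    rw [← card_univ]
    exact pow_factorial_le_prod_factorial _ _ hm (by rw [sum_fiberCard, h, card_univ])
  refine Nat.le_of_mul_le_mul_right ?_ (by positivity : 0 < ∏ j, (fiberCard f j)!)
  calc #{g : α → ι | fiberCard g = fiberCard f} * ∏ j, (fiberCard f j)!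
      = #{g : α → ι | fiberCard g = fiberCard b} * ∏ j, (fiberCard b j)! := by
        rw [card_fiberCard_eq_mul_prod_factorial, card_fiberCard_eq_mul_prod_factorial]
    _ ≤ #(balancedColorings α ι m) * ∏ j, (fiberCard f j)! := by
        rw [hcard, hbal, prod_const, card_univ]
        exact Nat.mul_le_mul_left _ hfact

theorem pow_card_le_mul_card_balancedColorings {m : ℕ}
    (hm : 0 < m) (h : Fintype.card α = Fintype.card ι * m) :
    Fintype.card ι ^ Fintype.card α ≤
      (Fintype.card α + 1) ^ Fintype.card ι * #(balancedColorings α ι m) := by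
  have himage : #(univ.image (fiberCard : (α → ι) → ι → ℕ)) ≤
      (Fintype.card α + 1) ^ Fintype.card ι := by
    calc #(univ.image (fiberCard : (α → ι) → ι → ℕ))
        ≤ #(Fintype.piFinset fun _ : ι => range (Fintype.card α + 1)) := by
          refine card_le_card fun k hk => ?_
          obtain ⟨f, -, rfl⟩ := mem_image.1 hk
          simpa [Nat.lt_succ_iff, fiberCard] using fun j => card_le_univ _
      _ = (Fintype.card α + 1) ^ Fintype.card ι := by simp
  calc Fintype.card ι ^ Fintype.card α = #(univ : Finset (α → ι)) := by simp
    _ = ∑ k ∈ univ.image fiberCard, #{g : α → ι | fiberCard g = k} :=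
        card_eq_sum_card_image _ _
    _ ≤ ∑ _k ∈ univ.image (fiberCard : (α → ι) → ι → ℕ), #(balancedColorings α ι m) := by
        refine sum_le_sum fun k hk => ?_
        obtain ⟨f, -, rfl⟩ := mem_image.1 hk
        exact card_fiberCard_eq_le_card_balancedColorings hm h f
    _ ≤ (Fintype.card α + 1) ^ Fintype.card ι * #(balancedColorings α ι m) := by
        rw [sum_const, smul_eq_mul]
        exact Nat.mul_le_mul_right _ himage

end BalancedColoring

open BalancedColoring in
/-- Lower bound on the number of restrictions to S of balanced colorings:
(number of distinct restrictions) · (N+1)^C ≥ C^|S|. -/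
theorem balanced_colorings_restriction_count (N C : ℕ) (hN : 0 < N) (hC : 0 < C)
    (hdvd : C ∣ N) (S : Finset (Fin N)) :
    C ^ S.card ≤
      ((Finset.univ.filter fun x : Fin N → Fin C =>
          ∀ j : Fin C, (Finset.univ.filter fun i => x i = j).card = N / C).image
        (fun x => fun i : S => x i)).card * (N + 1) ^ C := by
  set B := balancedColorings (Fin N) (Fin C) (N / C)
  suffices C ^ #S ≤ #(B.image fun x (i : S) => x i) * (N + 1) ^ C by
    -- the two filters differ only in their `Decidable` instances
    convert this using 4
    unfold B balancedColorings fiberCard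
    congr
  have hcard : Fintype.card (Fin N) = Fintype.card (Fin C) * (N / C) := by
    simp [Nat.mul_div_cancel' hdvd]
  have hB := pow_card_le_mul_card_balancedColorings (Nat.div_pos (Nat.le_of_dvd hN hdvd) hC) hcard
  have hR := card_le_card_image_restrict_mul_pow B S
  simp only [Fintype.card_fin] at hB hR
  refine Nat.le_of_mul_le_mul_right ?_ (pow_pos hC (N - #S))
  calc C ^ #S * C ^ (N - #S) = C ^ N := by
        rw [← pow_add, Nat.add_sub_cancel' (by simpa using card_le_univ S)]
    _ ≤ (N + 1) ^ C * #B := hB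
    _ ≤ (N + 1) ^ C * (#(B.image fun x (i : S) => x i) * C ^ (N - #S)) := by gcongr
    _ = #(B.image fun x (i : S) => x i) * (N + 1) ^ C * C ^ (N - #S) := by ring
end

section
/- Independence of colorings under interleaved fresh permutations: Let M, C be positive integers with C ∣ M and let c : Fin M → Fin C be a balanced coloring (every fiber of size M/C). Let σ₁, …, σ_k be mutually independent random permutations of Fin M on some probability space, each uniformly distributed on the permutation group of Fin M. For j = 1, …, k define Y_j = c ∘ σ_j ∘ σ_{j−1} ∘ ⋯ ∘ σ₁ (a random element of Fin M → Fin C). Then Y₁, …, Y_k are mutually independent, and each Y_j is uniformly distributed on the set of balanced colorings of Fin M with C colors. -/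
/-!
The prefix-product map `(σ₀, …, σₖ₋₁) ↦ (σ₀, σ₁σ₀, …, σₖ₋₁⋯σ₀)` is injective on
`Perm (Fin M)ᵏ` (each `σⱼ` is the quotient of two consecutive prefix products), hence a
bijection of a finite set, so it preserves the uniform distribution: the prefix products are
again independent and uniform. `Yⱼ` is a function of the `j`-th prefix product alone, which gives
independence. Finally, for a uniform permutation `g`, the coloring `c ∘ g` is uniform on the
colorings whose fibres have the sizes of those of `c`, because the fibres of `g ↦ c ∘ g` are
right cosets of the stabiliser of `c`.
-/

open MeasureTheory ProbabilityTheory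

open Finset in
theorem map_uniformOn_univ_of_card_fiber_eq {α β : Type*} [Fintype α] [Nonempty α]
    [MeasurableSpace α] [MeasurableSingletonClass α]
    [MeasurableSpace β] [MeasurableSingletonClass β] [Countable β] [DecidableEq β]
    (f : α → β) (n : ℕ) (hf : ∀ b ∈ univ.image f, #{a | f a = b} = n) :
    (uniformOn Set.univ).map f = uniformOn (Set.range f) := by
  classical
  have hcard : #(univ : Finset α) = #(univ.image f) * n := by
    rw [card_eq_sum_card_image f univ, sum_const_nat hf]
  have hrange : Set.range f = ↑(univ.image f) := by simp
  refine Measure.ext_of_singleton fun b => ?_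
  have hpre : f ⁻¹' {b} = ↑({a | f a = b} : Finset α) := by ext; simp
  rw [Measure.map_apply .of_discrete (measurableSet_singleton b), hpre, hrange, ← coe_univ,
    ← coe_singleton, uniformOn_apply_finset, uniformOn_apply_finset, univ_inter]
  by_cases hb : b ∈ univ.image f
  · have hn : (n : ENNReal) ≠ 0 := by
      obtain ⟨a, -, rfl⟩ := mem_image.1 hb
      rw [← hf _ hb]
      exact_mod_cast (card_pos.2 ⟨a, by simp⟩).ne'
    rw [hf b hb, inter_singleton_of_mem hb, card_singleton, hcard, Nat.cast_mul, Nat.cast_one,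
      ← ENNReal.mul_div_mul_right 1 _ hn (ENNReal.natCast_ne_top n), one_mul]
  · have hfib : ({a | f a = b} : Finset α) = ∅ :=
      filter_false_of_mem fun a _ (h : f a = b) => hb (h ▸ mem_image_of_mem f (mem_univ a))
    simp [hfib, inter_singleton_of_notMem hb]

theorem map_uniformOn_univ_of_injective {α : Type*} [Fintype α] [Nonempty α]
    [MeasurableSpace α] [MeasurableSingletonClass α] {f : α → α} (hf : f.Injective) :
    (uniformOn Set.univ).map f = uniformOn Set.univ := by
  classical
  rw [map_uniformOn_univ_of_card_fiber_eq f 1, (Finite.injective_iff_surjective.1 hf).range_eq]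
  intro b hb
  obtain ⟨a, -, rfl⟩ := Finset.mem_image.1 hb
  exact Finset.card_eq_one.2 ⟨a, by ext; simp [hf.eq_iff]⟩

theorem iIndepFun_and_map_eval_of_map_eq_pi {Ω ι : Type*} [Fintype ι] [MeasurableSpace Ω]
    {μ : Measure Ω} [IsProbabilityMeasure μ] {β : ι → Type*} [∀ i, MeasurableSpace (β i)]
    {Z : Ω → ∀ i, β i} (hZ : Measurable Z) {ν : ∀ i, Measure (β i)}
    [∀ i, IsProbabilityMeasure (ν i)] (h : μ.map Z = Measure.pi ν) :
    iIndepFun (fun i ω => Z ω i) μ ∧ ∀ i, μ.map (fun ω => Z ω i) = ν i := by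
  have hmarg (i : ι) : μ.map (fun ω => Z ω i) = ν i := by
    rw [← (measurePreserving_eval ν i).map_eq, ← h, Measure.map_map (measurable_pi_apply i) hZ]
    rfl
  refine ⟨(iIndepFun_iff_map_fun_eq_pi_map fun i => (hZ.eval (a := i)).aemeasurable).2 ?_,
    hmarg⟩
  rw [funext hmarg]
  exact h

section PrefixProd

variable {G : Type*} [Group G] {k : ℕ}

def prefixProd (s : Fin k → G) (j : Fin k) : G :=
  (List.ofFn fun i : Fin (j.val + 1) => s (Fin.castLE j.isLt i)).reverse.prod

theorem prefixProd_zero (s : Fin k → G) (h : 0 < k) : prefixProd s ⟨0, h⟩ = s ⟨0, h⟩ := by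
  simp only [prefixProd, List.ofFn_succ, List.ofFn_zero, List.reverse_singleton,
    List.prod_singleton]
  rfl

theorem prefixProd_succ (s : Fin k → G) (n : ℕ) (h : n + 1 < k) :
    prefixProd s ⟨n + 1, h⟩ = s ⟨n + 1, h⟩ * prefixProd s ⟨n, n.lt_succ_self.trans h⟩ := by
  simp only [prefixProd, List.ofFn_succ', List.concat_eq_append, List.reverse_append,
    List.reverse_singleton, List.singleton_append, List.prod_cons]
  rfl

theorem prefixProd_injective : (prefixProd : (Fin k → G) → Fin k → G).Injective := by
  intro s t hst
  funext ⟨j, hj⟩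
  cases j with
  | zero => simpa only [prefixProd_zero] using congrFun hst ⟨0, hj⟩
  | succ n =>
    have h := congrFun hst ⟨n + 1, hj⟩
    rw [prefixProd_succ, prefixProd_succ, congrFun hst ⟨n, _⟩] at h
    exact mul_right_cancel h

end PrefixProd

section Coloring

open Finset Equiv

variable {α β : Type*} [Fintype α] [DecidableEq β] (c : α → β)

theorem card_fiber_comp_perm (g : Perm α) (b : β) : #{a | c (g a) = b} = #{a | c a = b} :=
  card_equiv g fun a => by simp

theorem exists_perm_comp_eq_iff (x : α → β) :
    (∃ g : Perm α, c ∘ g = x) ↔ ∀ b, #{a | x a = b} = #{a | c a = b} := by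
  refine ⟨fun ⟨g, hg⟩ b => hg ▸ card_fiber_comp_perm c g b, fun h => ?_⟩
  refine ⟨ofFiberEquiv (f := x) (g := c) fun b => Fintype.equivOfCardEq ?_,
    funext (ofFiberEquiv_map _)⟩
  rw [Fintype.card_subtype, Fintype.card_subtype, h b]

theorem card_perm_comp_eq_of_comp_eq [DecidableEq α] {x : α → β} {g₀ : Perm α}
    (hx : c ∘ g₀ = x) : #{g : Perm α | c ∘ g = x} = #{g : Perm α | c ∘ g = c} := by
  refine (card_equiv (Equiv.mulRight g₀) fun g => ?_).symm
  simp only [mem_filter, mem_univ, true_and, coe_mulRight, ← hx]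
  exact g₀.surjective.injective_comp_right.eq_iff.symm

theorem map_comp_perm_uniformOn [DecidableEq α] [MeasurableSpace (Perm α)]
    [MeasurableSingletonClass (Perm α)] [MeasurableSpace β] [MeasurableSingletonClass β]
    [Countable β] :
    (uniformOn Set.univ).map (fun g : Perm α => c ∘ g) =
      uniformOn {x | ∀ b, #{a | x a = b} = #{a | c a = b}} := by
  rw [map_uniformOn_univ_of_card_fiber_eq _ #{g : Perm α | c ∘ g = c}]
  · congr 1
    ext x
    exact exists_perm_comp_eq_iff c x
  · intro x hx
    obtain ⟨g₀, -, hg₀⟩ := mem_image.1 hx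
    exact card_perm_comp_eq_of_comp_eq c hg₀

end Coloring

theorem interleaved_colorings_independent_general {Ω : Type} [MeasurableSpace Ω]
    (μ : Measure Ω) [IsProbabilityMeasure μ]
    (M C k : ℕ)
    (c : Fin M → Fin C)
    (hbal : ∀ j : Fin C, (Finset.univ.filter fun i => c i = j).card = M / C)
    [MeasurableSpace (Equiv.Perm (Fin M))]
    [MeasurableSingletonClass (Equiv.Perm (Fin M))]
    (σ : Fin k → Ω → Equiv.Perm (Fin M))
    (hσmeas : ∀ i, Measurable (σ i))
    (hσindep : iIndepFun σ μ)
    (hσunif : ∀ i, μ.map (σ i) = uniformOn (Set.univ : Set (Equiv.Perm (Fin M))))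
    (Y : Fin k → Ω → (Fin M → Fin C))
    (hY : ∀ (j : Fin k) (ω : Ω),
      Y j ω = c ∘ ⇑((List.ofFn fun i : Fin (j.val + 1) =>
        σ (Fin.castLE j.isLt i) ω).reverse.prod)) :
    iIndepFun Y μ ∧
      ∀ j : Fin k, μ.map (Y j) =
        uniformOn {x : Fin M → Fin C |
          ∀ j : Fin C, (Finset.univ.filter fun i => x i = j).card = M / C} := by
  have hσlaw : μ.map (fun ω i => σ i ω) = uniformOn Set.univ := by
    rw [hσindep.map_fun_eq_pi_map fun i => (hσmeas i).aemeasurable, funext hσunif,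
      ← uniformOn_pi, Set.pi_univ]
  have hσvec : Measurable fun ω i => σ i ω := measurable_pi_lambda _ hσmeas
  have hPlaw : μ.map (fun ω => prefixProd fun i => σ i ω) =
      Measure.pi fun _ => uniformOn Set.univ := by
    rw [← Function.comp_def prefixProd, ← Measure.map_map .of_discrete hσvec, hσlaw,
      map_uniformOn_univ_of_injective prefixProd_injective, ← uniformOn_pi, Set.pi_univ]
  have hPmeas : Measurable fun ω => prefixProd fun i => σ i ω :=
    (Measurable.of_discrete (f := prefixProd)).comp hσvec
  obtain ⟨hPindep, hPunif⟩ := iIndepFun_and_map_eval_of_map_eq_pi hPmeas hPlaw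
  have hYP : Y = fun j => (fun g : Equiv.Perm (Fin M) => c ∘ g) ∘
      fun ω => prefixProd (fun i => σ i ω) j :=
    funext fun j => funext (hY j)
  subst hYP
  refine ⟨hPindep.comp _ fun _ => .of_discrete, fun j => ?_⟩
  rw [← Measure.map_map .of_discrete hPmeas.eval, hPunif j, map_comp_perm_uniformOn]
  simp_rw [hbal]

/-- Independence of colorings under interleaved fresh permutations. -/
theorem interleaved_colorings_independent {Ω : Type} [MeasurableSpace Ω]
    (μ : Measure Ω) [IsProbabilityMeasure μ]
    (M C k : ℕ) [NeZero M] [NeZero C] (hdvd : C ∣ M)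
    (c : Fin M → Fin C)
    (hbal : ∀ j : Fin C, (Finset.univ.filter fun i => c i = j).card = M / C)
    [MeasurableSpace (Equiv.Perm (Fin M))]
    [MeasurableSingletonClass (Equiv.Perm (Fin M))]
    (σ : Fin k → Ω → Equiv.Perm (Fin M))
    (hσmeas : ∀ i, Measurable (σ i))
    (hσindep : iIndepFun σ μ)
    (hσunif : ∀ i, μ.map (σ i) = uniformOn (Set.univ : Set (Equiv.Perm (Fin M))))
    (Y : Fin k → Ω → (Fin M → Fin C))
    (hY : ∀ (j : Fin k) (ω : Ω),
      Y j ω = c ∘ ⇑((List.ofFn fun i : Fin (j.val + 1) =>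
        σ (Fin.castLE j.isLt i) ω).reverse.prod)) :
    iIndepFun Y μ ∧
      ∀ j : Fin k, μ.map (Y j) =
        uniformOn {x : Fin M → Fin C |
          ∀ j : Fin C, (Finset.univ.filter fun i => x i = j).card = M / C} :=
  interleaved_colorings_independent_general μ M C k c hbal σ hσmeas hσindep hσunif Y hY
end
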